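/- arXiv:2604.12557 — 2 statements merged into one kernel-verified Lean document; each statement's English description precedes it below -/
import Mathlib

section
/- For every positive integer n, M̄_e(n) - M̄_o(n) ≡ 0 (mod 4) if n is not a perfect square, and M̄_e(n) - M̄_o(n) ≡ 2 (mod 4) if n is a perfect square. -/
/-- An overpartition of `n`: a partition of `n` together with a choice, for each
distinct part size, of whether its first occurrence is overlined. -/
structure Overpartition (n : ℕ) where
  partition : n.Partition
  overlined : Finset ℕ
  overlined_subset : overlined ⊆ partition.parts.toFinset

instance subsetFintype (t : Finset ℕ) : Fintype {s : Finset ℕ // s ⊆ t} :=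
  Fintype.subtype t.powerset (fun _ => Finset.mem_powerset)

instance (n : ℕ) : Fintype (Overpartition n) :=
  Fintype.ofEquiv (Σ π : n.Partition, {s : Finset ℕ // s ⊆ π.parts.toFinset})
    { toFun := fun x => ⟨x.1, x.2.1, x.2.2⟩
      invFun := fun o => ⟨o.partition, o.overlined, o.overlined_subset⟩
      left_inv := fun _ => rfl
      right_inv := fun _ => rfl }

/-- The number of missing integers of an overpartition: positive integers less than
the largest part which occur neither overlined nor non-overlined. -/
def missingCount {n : ℕ} (o : Overpartition n) : ℕ :=
  ((Finset.Ico 1 o.partition.parts.sup).filter (fun j => j ∉ o.partition.parts)).card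

/-- `OPcount n m` is the number of overpartitions of `n` with exactly `m` missing integers. -/
def OPcount (n m : ℕ) : ℕ := Fintype.card {o : Overpartition n // missingCount o = m}

/-- The number of overpartitions of `n` with an even number of missing integers. -/
def OMe (n : ℕ) : ℕ := Fintype.card {o : Overpartition n // Even (missingCount o)}

/-- The number of overpartitions of `n` with an odd number of missing integers. -/
def OMo (n : ℕ) : ℕ := Fintype.card {o : Overpartition n // Odd (missingCount o)}


lemma odd_card_divisors_iff {n : ℕ} (hn : 0 < n) :
    Odd n.divisors.card ↔ IsSquare n := by
  rw [Nat.card_divisors hn.ne']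
  have hsupp : n.factorization.support = n.primeFactors := Nat.support_factorization n
  have h1 : Odd (∏ p ∈ n.primeFactors, (n.factorization p + 1)) ↔
      ∀ p ∈ n.primeFactors, Even (n.factorization p) := by
    rw [Nat.not_even_iff_odd.symm, even_iff_two_dvd,
      Nat.prime_two.prime.dvd_finset_prod_iff]
    push_neg
    refine forall_congr' fun p => forall_congr' fun hp => ?_
    rw [← even_iff_two_dvd, Nat.even_add_one, not_not]
  rw [h1]
  constructor
  · intro h
    refine ⟨n.factorization.prod fun p k => p ^ (k / 2), ?_⟩
    conv_lhs => rw [← Nat.factorization_prod_pow_eq_self hn.ne']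
    rw [Finsupp.prod, Finsupp.prod, ← Finset.prod_mul_distrib, hsupp]
    refine Finset.prod_congr rfl fun p hp => ?_
    rw [← pow_add]
    obtain ⟨t, ht⟩ := h p hp
    rw [ht]
    congr 1
    omega
  · rintro ⟨m, rfl⟩ p _
    have hm : m ≠ 0 := by rintro rfl; simp at hn
    rw [Nat.factorization_mul hm hm, Finsupp.add_apply]
    exact ⟨_, rfl⟩


lemma signed_count {α : Type*} [Fintype α] (f : α → ℕ) :
    (Fintype.card {a // Even (f a)} : ℤ) - (Fintype.card {a // Odd (f a)} : ℤ)
      = ∑ a : α, (-1 : ℤ) ^ (f a) := by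
  classical
  rw [Fintype.card_subtype, Fintype.card_subtype]
  rw [← Finset.sum_filter_add_sum_filter_not Finset.univ (fun a => Even (f a))
    (fun a => (-1 : ℤ) ^ (f a))]
  rw [Finset.sum_congr rfl (fun a ha => (Finset.mem_filter.1 ha).2.neg_one_pow),
    Finset.sum_congr rfl
      (fun a ha => (Nat.not_even_iff_odd.1 (Finset.mem_filter.1 ha).2).neg_one_pow)]
  simp only [Finset.sum_const, nsmul_eq_mul, mul_one, mul_neg_one]
  have : (Finset.univ.filter fun a => ¬ Even (f a))
      = Finset.univ.filter fun a => Odd (f a) := by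
    simp [Nat.not_even_iff_odd]
  rw [this]
  ring

lemma card_subsets (t : Finset ℕ) : Fintype.card {s : Finset ℕ // s ⊆ t} = 2 ^ t.card := by
  rw [Fintype.card_of_subtype t.powerset (fun _ => Finset.mem_powerset),
    Finset.card_powerset]

lemma sum_op {M : Type*} [AddCommMonoid M] (n : ℕ) (g : n.Partition → M) :
    ∑ o : Overpartition n, g o.partition
      = ∑ π : n.Partition, 2 ^ π.parts.toFinset.card • g π := by
  classical
  let e : (Σ π : n.Partition, {s : Finset ℕ // s ⊆ π.parts.toFinset}) ≃ Overpartition n :=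
    { toFun := fun x => ⟨x.1, x.2.1, x.2.2⟩
      invFun := fun o => ⟨o.partition, o.overlined, o.overlined_subset⟩
      left_inv := fun _ => rfl
      right_inv := fun _ => rfl }
  rw [← Fintype.sum_equiv e (fun x => g x.1) (fun o => g o.partition) (fun x => rfl)]
  rw [← Finset.univ_sigma_univ, Finset.sum_sigma]
  refine Finset.sum_congr rfl fun π _ => ?_
  have : ∀ s : { s // s ⊆ π.parts.toFinset }, g (⟨π, s⟩ : Σ π : n.Partition, _).1 = g π := fun _ => rfl
  rw [Finset.sum_congr rfl fun s _ => this s, Finset.sum_const, Finset.card_univ, card_subsets]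


def pMiss {n : ℕ} (π : n.Partition) : ℕ :=
  ((Finset.Ico 1 π.parts.sup).filter (fun j => j ∉ π.parts)).card

lemma sup_replicate {k a : ℕ} (hk : 0 < k) : (Multiset.replicate k a).sup = a := by
  refine le_antisymm (Multiset.sup_le.2 fun b hb => ?_) (Multiset.le_sup ?_)
  · rw [Multiset.eq_of_mem_replicate hb]
  · rw [Multiset.mem_replicate]; exact ⟨hk.ne', rfl⟩

lemma single_part {n : ℕ} (hn : 0 < n) (π : n.Partition)
    (h : π.parts.toFinset.card = 1) :
    ∃ a k : ℕ, 0 < a ∧ 0 < k ∧ π.parts = Multiset.replicate k a ∧ n = k * a := by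
  obtain ⟨a, ha⟩ := Finset.card_eq_one.1 h
  have hmem : a ∈ π.parts := by
    rw [← Multiset.mem_toFinset, ha]; exact Finset.mem_singleton_self a
  have hrep : π.parts = Multiset.replicate π.parts.card a := by
    rw [Multiset.eq_replicate]
    exact ⟨rfl, fun b hb => by
      have := Multiset.mem_toFinset.2 hb
      rwa [ha, Finset.mem_singleton] at this⟩
  have hk : 0 < π.parts.card := by
    rcases Nat.eq_zero_or_pos π.parts.card with h0 | h0
    · rw [Multiset.card_eq_zero] at h0
      have := π.parts_sum; rw [h0] at this; simp at this; omega
    · exact h0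
  refine ⟨a, π.parts.card, π.parts_pos hmem, hk, hrep, ?_⟩
  have := π.parts_sum
  rw [hrep] at this
  rw [Multiset.sum_replicate, smul_eq_mul] at this
  omega

lemma pMiss_replicate {n : ℕ} (π : n.Partition) {k a : ℕ} (hk : 0 < k)
    (hrep : π.parts = Multiset.replicate k a) : pMiss π = a - 1 := by
  unfold pMiss
  rw [hrep, sup_replicate hk, Finset.filter_true_of_mem, Nat.card_Ico]
  intro j hj
  rw [Multiset.mem_replicate]
  rintro ⟨-, rfl⟩
  exact absurd (Finset.mem_Ico.1 hj).2 (lt_irrefl _)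

def divP (n L : ℕ) (hL : L ∈ n.divisors) : n.Partition where
  parts := Multiset.replicate (n / L) L
  parts_pos := fun hi => by
    rw [Multiset.eq_of_mem_replicate hi]; exact Nat.pos_of_mem_divisors hL
  parts_sum := by
    rw [Multiset.sum_replicate, smul_eq_mul,
      Nat.div_mul_cancel (Nat.dvd_of_mem_divisors hL)]

lemma divP_k_pos (n L : ℕ) (hL : L ∈ n.divisors) : 0 < n / L :=
  Nat.div_pos (Nat.le_of_dvd (Nat.pos_of_ne_zero (Nat.mem_divisors.1 hL).2)
    (Nat.dvd_of_mem_divisors hL)) (Nat.pos_of_mem_divisors hL)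

lemma key_sum (n : ℕ) (hn : 0 < n) :
    (∑ π : n.Partition, (2 : ZMod 4) ^ π.parts.toFinset.card * (-1) ^ (pMiss π))
      = 2 * n.divisors.card := by
  classical
  have hzero : ∀ π ∈ Finset.univ, π ∉ Finset.univ.filter
      (fun π : n.Partition => π.parts.toFinset.card = 1) →
      (2 : ZMod 4) ^ π.parts.toFinset.card * (-1) ^ (pMiss π) = 0 := by
    intro π _ hπ
    simp only [Finset.mem_filter, Finset.mem_univ, true_and] at hπ
    have hc0 : π.parts.toFinset.card ≠ 0 := by
      intro h0
      rw [Finset.card_eq_zero, Multiset.toFinset_eq_empty] at h0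
      have := π.parts_sum
      rw [h0] at this
      simp at this
      omega
    have h2 : (2 : ZMod 4) ^ π.parts.toFinset.card = 0 := by
      rw [show π.parts.toFinset.card = 2 + (π.parts.toFinset.card - 2) by omega, pow_add,
        show (2 : ZMod 4) ^ 2 = 0 by decide, zero_mul]
    rw [h2, zero_mul]
  rw [← Finset.sum_subset (Finset.filter_subset _ _) hzero]
  have hbij : ∑ π ∈ Finset.univ.filter
        (fun π : n.Partition => π.parts.toFinset.card = 1),
        (2 : ZMod 4) ^ π.parts.toFinset.card * (-1) ^ (pMiss π)
      = ∑ L ∈ n.divisors, 2 * (-1 : ZMod 4) ^ (L - 1) := by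
    refine Finset.sum_bij' (fun π _ => π.parts.sup) (fun L hL => divP n L hL)
      ?_ ?_ ?_ ?_ ?_
    · intro π hπ
      simp only [Finset.mem_filter, Finset.mem_univ, true_and] at hπ
      obtain ⟨a, k, ha, hk, hrep, hn'⟩ := single_part hn π hπ
      show π.parts.sup ∈ n.divisors
      rw [hrep, sup_replicate hk, Nat.mem_divisors]
      exact ⟨⟨k, by rw [hn', mul_comm]⟩, hn.ne'⟩
    · intro L hL
      simp only [Finset.mem_filter, Finset.mem_univ, true_and]
      show (Multiset.replicate (n / L) L).toFinset.card = 1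
      rw [Multiset.toFinset_replicate, if_neg (divP_k_pos n L hL).ne']
      exact Finset.card_singleton L
    · intro π hπ
      simp only [Finset.mem_filter, Finset.mem_univ, true_and] at hπ
      obtain ⟨a, k, ha, hk, hrep, hn'⟩ := single_part hn π hπ
      have hsup : π.parts.sup = a := by rw [hrep]; exact sup_replicate hk
      have : n / π.parts.sup = k := by rw [hsup, hn', Nat.mul_div_cancel k ha]
      ext1
      show Multiset.replicate (n / π.parts.sup) π.parts.sup = π.parts
      rw [this, hsup, hrep]
    · intro L hL
      show (Multiset.replicate (n / L) L).sup = L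
      exact sup_replicate (divP_k_pos n L hL)
    · intro π hπ
      simp only [Finset.mem_filter, Finset.mem_univ, true_and] at hπ
      obtain ⟨a, k, ha, hk, hrep, hn'⟩ := single_part hn π hπ
      have hsup : π.parts.sup = a := by rw [hrep]; exact sup_replicate hk
      show (2 : ZMod 4) ^ π.parts.toFinset.card * (-1) ^ pMiss π
        = 2 * (-1) ^ (π.parts.sup - 1)
      rw [hπ, pMiss_replicate π hk hrep, hsup, pow_one]
  rw [hbij]
  have : ∀ L ∈ n.divisors, 2 * (-1 : ZMod 4) ^ (L - 1) = 2 := by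
    intro L _
    rcases Nat.even_or_odd (L - 1) with h | h
    · rw [h.neg_one_pow, mul_one]
    · rw [h.neg_one_pow]; decide
  rw [Finset.sum_congr rfl this, Finset.sum_const, nsmul_eq_mul, mul_comm]

lemma cast_diff (n : ℕ) (hn : 0 < n) :
    (((OMe n : ℤ) - (OMo n : ℤ) : ℤ) : ZMod 4) = 2 * n.divisors.card := by
  classical
  have h1 : (OMe n : ℤ) - (OMo n : ℤ)
      = ∑ o : Overpartition n, (-1 : ℤ) ^ (missingCount o) :=
    signed_count missingCount
  have h2 : (((OMe n : ℤ) - (OMo n : ℤ) : ℤ) : ZMod 4)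
      = ∑ o : Overpartition n, (-1 : ZMod 4) ^ (pMiss o.partition) := by
    rw [h1]
    push_cast
    rfl
  rw [h2, sum_op n (fun π => (-1 : ZMod 4) ^ (pMiss π)), ← key_sum n hn]
  refine Finset.sum_congr rfl fun π _ => ?_
  rw [nsmul_eq_mul, Nat.cast_pow, Nat.cast_ofNat]

theorem statement15 (n : ℕ) (hn : 0 < n) :
    (¬ IsSquare n → ((OMe n : ℤ) - (OMo n : ℤ)) % 4 = 0) ∧
    (IsSquare n → ((OMe n : ℤ) - (OMo n : ℤ)) % 4 = 2) := by
  have hc := cast_diff n hn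
  constructor
  · intro hsq
    have hev : Even n.divisors.card := by
      rw [← Nat.not_odd_iff_even, odd_card_divisors_iff hn]
      exact hsq
    obtain ⟨k, hk⟩ := hev
    have h0 : (((OMe n : ℤ) - (OMo n : ℤ) : ℤ) : ZMod 4) = 0 := by
      rw [hc, hk]
      push_cast
      have h4 : (2 : ZMod 4) * (k + k) = 4 * k := by ring
      rw [h4, show (4 : ZMod 4) = 0 by decide, zero_mul]
    have := (ZMod.intCast_zmod_eq_zero_iff_dvd _ 4).1 h0
    omega
  · intro hsq
    have hodd : Odd n.divisors.card := (odd_card_divisors_iff hn).2 hsq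
    obtain ⟨k, hk⟩ := hodd
    have h2 : (((OMe n : ℤ) - (OMo n : ℤ) : ℤ) : ZMod 4) = ((2 : ℤ) : ZMod 4) := by
      rw [hc, hk]
      push_cast
      have h4 : (2 : ZMod 4) * (2 * k + 1) = 4 * k + 2 := by ring
      rw [h4, show (4 : ZMod 4) = 0 by decide, zero_mul, zero_add]
    have hmod : ((OMe n : ℤ) - (OMo n : ℤ)) % 4 = (2 : ℤ) % 4 :=
      (ZMod.intCast_eq_intCast_iff _ _ _).1 h2
    omega
end

section
/- The coefficients of the formal power series (-3q;q)_∞ (q;q^2)_∞ are congruent modulo 4 to those of 1 + 2∑_{n≥1} q^{n^2}: the coefficient of q^n (n ≥ 1) is ≡ 2 (mod 4) if n is a square and ≡ 0 (mod 4) otherwise. -/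
/-!
Modulo 4 we have `1 + 3x = (1 + x)(1 + 2x/(1 - x))`, and a product of factors `1 + 2aᵢ` equals
`1 + 2∑ aᵢ`. Hence `(-3q;q)_∞ ≡ (-q;q)_∞ (1 + 2∑_{k,j ≥ 1} q^{kj})`, and Euler's identity
`(-q;q)_∞ (q;q²)_∞ = 1` cancels the remaining product. In `2∑_{k,j} q^{kj}` the terms with `k ≠ j`
cancel in pairs modulo 4, which leaves `1 + 2∑_{k ≥ 1} q^{k²}`. All products are finite and the
identities are taken modulo `X^(n+1)`.
-/

/-- The coefficient of `q^n` in the formal power series `(-3q;q)_∞ (q;q²)_∞`.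
Since the factors `(1 + 3q^k)` for `k > n` and `(1 - q^(2k-1))` for `2k-1 > n` do not
affect the coefficient of `q^n`, it equals the coefficient in the truncated product. -/
noncomputable def coeffProd (n : ℕ) : ℤ :=
  PowerSeries.coeff (R := ℤ) n
    ((∏ k ∈ Finset.range n, (1 + 3 * PowerSeries.X ^ (k + 1))) *
      ∏ k ∈ Finset.range n, (1 - PowerSeries.X ^ (2 * k + 1)))

open PowerSeries Finset

section

variable {R : Type*} [CommRing R]

theorem prod_one_add_two_mul_of_four_eq_zero (h4 : (4 : R) = 0) {ι : Type*} (s : Finset ι)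
    (a : ι → R) : ∏ i ∈ s, (1 + 2 * a i) = 1 + 2 * ∑ i ∈ s, a i := by
  classical
  induction s using Finset.induction_on with
  | empty => simp
  | insert i s hi ih =>
    rw [prod_insert hi, sum_insert hi, ih]
    linear_combination (a i * ∑ j ∈ s, a j) * h4

theorem two_mul_sum_sum_of_symm_of_four_eq_zero (h4 : (4 : R) = 0) {ι : Type*} [DecidableEq ι]
    (s : Finset ι) (f : ι → ι → R) (hf : ∀ i j, f i j = f j i) :
    2 * ∑ i ∈ s, ∑ j ∈ s, f i j = 2 * ∑ i ∈ s, f i i := by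
  have hoff : ∑ p ∈ s.offDiag, 2 * f p.1 p.2 = 0 :=
    sum_involution (fun p _ => p.swap)
      (fun p _ => by
        rw [Prod.fst_swap, Prod.snd_swap, hf p.2 p.1]
        linear_combination f p.1 p.2 * h4)
      (fun p hp _ => by
        obtain ⟨-, -, hne⟩ := mem_offDiag.1 hp
        exact fun h => hne (congrArg Prod.snd h))
      (fun p hp => by
        obtain ⟨h1, h2, hne⟩ := mem_offDiag.1 hp
        exact mem_offDiag.2 ⟨h2, h1, Ne.symm hne⟩)
      (fun p _ => p.swap_swap)
  rw [← sum_product', ← diag_union_offDiag, sum_union (disjoint_diag_offDiag s), sum_diag,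
    mul_add, mul_sum s.offDiag, hoff, add_zero]

theorem one_add_three_mul_eq_of_four_eq_zero (h4 : (4 : R) = 0) (x : R) (N : ℕ) :
    1 + 3 * x = (1 + x) * (1 + 2 * ∑ j ∈ range N, x ^ (j + 1)) + 2 * x ^ (N + 1) := by
  have hgeom := geom_sum_mul_neg x N
  simp only [pow_succ', ← mul_sum]
  linear_combination (-2 * x) * hgeom - x ^ 2 * (∑ i ∈ range N, x ^ i) * h4

theorem prod_range_two_mul_one_sub_pow (x : R) (n : ℕ) :
    ∏ k ∈ range (2 * n), (1 - x ^ (k + 1)) =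
      (∏ k ∈ range n, (1 - x ^ (2 * k + 1))) * ∏ k ∈ range n, (1 - x ^ (2 * k + 2)) := by
  induction n with
  | zero => simp
  | succ n ih =>
    rw [show 2 * (n + 1) = 2 * n + 1 + 1 by ring, prod_range_succ, prod_range_succ, ih,
      prod_range_succ, prod_range_succ]
    ring

theorem prod_one_add_pow_mul_prod_one_sub_pow (x : R) (n : ℕ) :
    (∏ k ∈ range n, (1 + x ^ (k + 1))) * ∏ k ∈ range n, (1 - x ^ (k + 1)) =
      ∏ k ∈ range n, (1 - x ^ (2 * k + 2)) := by
  rw [← prod_mul_distrib]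
  exact prod_congr rfl fun k _ => by ring

noncomputable abbrev modXPow (n : ℕ) : R⟦X⟧ →+* R⟦X⟧ ⧸ Ideal.span {(X : R⟦X⟧) ^ (n + 1)} :=
  Ideal.Quotient.mk _

theorem modXPow_X_pow {n m : ℕ} (h : n < m) : modXPow n (X ^ m : R⟦X⟧) = 0 := by
  rw [Ideal.Quotient.eq_zero_iff_mem, Ideal.mem_span_singleton]
  exact pow_dvd_pow X h

theorem coeff_eq_of_modXPow_eq {n : ℕ} {f g : R⟦X⟧} (h : modXPow n f = modXPow n g) :
    coeff n f = coeff n g := by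
  rw [Ideal.Quotient.eq, Ideal.mem_span_singleton, X_pow_dvd_iff] at h
  simpa [sub_eq_zero] using h n n.lt_succ_self

-- Times `P = (q;q)_n` the left side is `(q;q)_{2n} ≡ P`, and `P` is a unit.
theorem modXPow_prod_one_sub_X_pow_odd_mul_prod_one_add_X_pow (n : ℕ) :
    modXPow n ((∏ k ∈ range n, (1 - X ^ (2 * k + 1))) * ∏ k ∈ range n, (1 + X ^ (k + 1)) :
      R⟦X⟧) = 1 := by
  set P := ∏ k ∈ range n, (1 - (X : R⟦X⟧) ^ (k + 1))
  have hunit : IsUnit (modXPow n P) := (isUnit_iff_constantCoeff.2 (by simp [P])).map _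
  have htail : modXPow n (∏ k ∈ range (2 * n), (1 - X ^ (k + 1))) = modXPow n P := by
    rw [two_mul, prod_range_add, map_mul, map_prod (modXPow n) _ (range n)]
    simp [modXPow_X_pow (by omega : n < n + _ + 1)]
  rw [← hunit.mul_eq_right, ← map_mul, mul_assoc, prod_one_add_pow_mul_prod_one_sub_pow,
    ← prod_range_two_mul_one_sub_pow, htail]

theorem modXPow_prod_one_add_three_mul_X_pow_mul_prod_one_sub_X_pow_odd (h4 : (4 : R) = 0)
    (n : ℕ) :
    modXPow n ((∏ k ∈ range n, (1 + 3 * X ^ (k + 1))) * ∏ k ∈ range n, (1 - X ^ (2 * k + 1)) :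
      R⟦X⟧) = modXPow n (1 + 2 * ∑ k ∈ range n, X ^ ((k + 1) ^ 2)) := by
  have h4' : (4 : R⟦X⟧) = 0 := by
    rw [← map_ofNat (C (R := R)) 4, h4, map_zero]
  have hfactor : ∀ k ∈ range n, modXPow n (1 + 3 * X ^ (k + 1) : R⟦X⟧) =
      modXPow n ((1 + X ^ (k + 1)) * (1 + 2 * ∑ j ∈ range n, X ^ ((k + 1) * (j + 1)))) := by
    intro k _
    simp only [pow_mul]
    rw [one_add_three_mul_eq_of_four_eq_zero h4' _ n, map_add, map_mul _ 2,
      ← pow_mul, modXPow_X_pow (by nlinarith), mul_zero, add_zero]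
  have hsquares : 2 * ∑ k ∈ range n, ∑ j ∈ range n, (X : R⟦X⟧) ^ ((k + 1) * (j + 1)) =
      2 * ∑ k ∈ range n, X ^ ((k + 1) ^ 2) := by
    rw [two_mul_sum_sum_of_symm_of_four_eq_zero h4' _ _ fun i j => by rw [mul_comm]]
    simp only [sq]
  rw [map_mul, map_prod, prod_congr rfl hfactor, ← map_prod, prod_mul_distrib,
    prod_one_add_two_mul_of_four_eq_zero h4', hsquares, ← map_mul, mul_right_comm,
    map_mul, mul_comm (∏ k ∈ range n, _), modXPow_prod_one_sub_X_pow_odd_mul_prod_one_add_X_pow,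
    one_mul]

theorem coeff_one_add_two_mul_sum_X_pow_sq {n : ℕ} (hn : 1 ≤ n) :
    coeff n (1 + 2 * ∑ k ∈ range n, X ^ ((k + 1) ^ 2) : R⟦X⟧) = if IsSquare n then 2 else 0 := by
  rw [← map_ofNat C 2, map_add, coeff_one, if_neg (by omega), zero_add, coeff_C_mul, map_sum]
  simp only [coeff_X_pow]
  split_ifs with hsq
  · obtain ⟨r, rfl⟩ := hsq
    have hr : 1 ≤ r := Nat.one_le_iff_ne_zero.2 fun h => by simp [h] at hn
    rw [sum_eq_single (r - 1), Nat.sub_add_cancel hr, sq, if_pos rfl, mul_one]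
    · intro k _ hk
      rw [if_neg fun h => hk (by rw [sq, Nat.mul_self_inj] at h; omega)]
    · exact fun h => absurd (mem_range.2 (by have := Nat.le_mul_self r; omega)) h
  · rw [sum_eq_zero fun k _ => if_neg fun h => hsq ⟨k + 1, by rw [h, sq]⟩, mul_zero]

end

theorem intCast_coeffProd {n : ℕ} (hn : 1 ≤ n) :
    (coeffProd n : ZMod 4) = if IsSquare n then 2 else 0 := by
  have h4 : (4 : ZMod 4) = 0 := rfl
  rw [← coeff_one_add_two_mul_sum_X_pow_sq hn, ← coeff_eq_of_modXPow_eq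
    (modXPow_prod_one_add_three_mul_X_pow_mul_prod_one_sub_X_pow_odd h4 n), coeffProd,
    ← eq_intCast (Int.castRingHom _), ← coeff_map]
  simp [map_ofNat]

theorem statement16 (n : ℕ) (hn : 1 ≤ n) :
    (IsSquare n → coeffProd n % 4 = 2) ∧
    (¬ IsSquare n → coeffProd n % 4 = 0) := by
  have hmod : coeffProd n % 4 = ((coeffProd n : ZMod 4).val : ℤ) := (ZMod.val_intCast _).symm
  rw [intCast_coeffProd hn] at hmod
  constructor
  · intro h
    rw [hmod, if_pos h]
    rfl
  · intro h
    rw [hmod, if_neg h]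
    rfl
end
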